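/- arXiv:1505.03950 — 3 statements merged into one kernel-verified Lean document; each statement's English description precedes it below -/
import Mathlib

section
/- ▲-bisimilarity is an equivalence relation on pointed Kripke models: it is reflexive, symmetric, and transitive. -/
structure Model where
  W : Type
  ne : Nonempty W
  R : W → W → Prop
  V : ℕ → W → Prop

/-- Disjoint union of two models. -/
def dsum (M N : Model) : Model where
  W := M.W ⊕ N.W
  ne := ⟨Sum.inl M.ne.some⟩
  R := fun a b =>
    match a, b with
    | .inl x, .inl y => M.R x y
    | .inr x, .inr y => N.R x y
    | _, _ => False
  V := fun n => Sum.elim (M.V n) (N.V n)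

/-- Z is a ▲-bisimulation on the model M. -/
def IsTriBisim (M : Model) (Z : M.W → M.W → Prop) : Prop :=
  (∃ a b, Z a b) ∧
  ∀ s s', Z s s' →
    (∀ n, M.V n s ↔ M.V n s') ∧
    (∀ t, M.R s t → ¬ Z s t → ∃ t', M.R s' t' ∧ Z t t') ∧
    (∀ t', M.R s' t' → ¬ Z s' t' → ∃ t, M.R s t ∧ Z t t')

/-- (M,s) and (N,t) are ▲-bisimilar. -/
def TriBisimilar (M : Model) (s : M.W) (N : Model) (t : N.W) : Prop :=
  ∃ Z, IsTriBisim (dsum M N) Z ∧ Z (.inl s) (.inr t)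

/-!
The side condition `(s, t) ∉ Z` of the ▲-clauses survives passing to the equivalence closure
`E` of `Z`: if `E a b`, `E b c` and a successor `t` of `a` with `¬ E a t` is matched from `b`
by `t₁` with `E t t₁`, then `¬ E b t₁`, so `t₁` can be matched again from `c`. Hence every
▲-bisimulation may be replaced by an equivalence relation, which gives symmetry. Moreover
▲-bisimulations can be pushed forward and pulled back along bounded morphisms. Reflexivity pulls
back equality along the codiagonal `M ⊕ M → M`; for transitivity, both bisimulations are pushed
into `(M ⊕ N) ⊕ O`, where the equivalence closure of their union links the two outer points, and
that is pulled back to `M ⊕ O`.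
-/

namespace Model

def TriZigzagAt (M : Model) (Z : M.W → M.W → Prop) (s s' : M.W) : Prop :=
  (∀ n, M.V n s ↔ M.V n s') ∧
  (∀ t, M.R s t → ¬ Z s t → ∃ t', M.R s' t' ∧ Z t t') ∧
  (∀ t', M.R s' t' → ¬ Z s' t' → ∃ t, M.R s t ∧ Z t t')

def TriZigzag (M : Model) (Z : M.W → M.W → Prop) : Prop :=
  ∀ s s', Z s s' → TriZigzagAt M Z s s'

theorem triBisimilar_iff {M N : Model} {s : M.W} {t : N.W} :
    TriBisimilar M s N t ↔ ∃ Z, TriZigzag (dsum M N) Z ∧ Z (.inl s) (.inr t) :=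
  ⟨fun ⟨Z, ⟨_, hZ⟩, hst⟩ => ⟨Z, hZ, hst⟩, fun ⟨Z, hZ, hst⟩ => ⟨Z, ⟨⟨_, _, hst⟩, hZ⟩, hst⟩⟩

namespace TriZigzagAt

variable {M : Model} {Z E : M.W → M.W → Prop} {a b c : M.W}

theorem mono {Z' : M.W → M.W → Prop} (hle : ∀ {x y}, Z x y → Z' x y)
    (h : TriZigzagAt M Z a b) : TriZigzagAt M Z' a b := by
  obtain ⟨hV, hforth, hback⟩ := h
  refine ⟨hV, fun t ht hnt => ?_, fun t' ht' hnt => ?_⟩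
  · obtain ⟨t', ht', hZt⟩ := hforth t ht (mt hle hnt)
    exact ⟨t', ht', hle hZt⟩
  · obtain ⟨t, ht, hZt⟩ := hback t' ht' (mt hle hnt)
    exact ⟨t, ht, hle hZt⟩

theorem self (hE : ∀ x, E x x) (a : M.W) : TriZigzagAt M E a a :=
  ⟨fun _ => Iff.rfl, fun t ht _ => ⟨t, ht, hE t⟩, fun t ht _ => ⟨t, ht, hE t⟩⟩

theorem symm (hE : ∀ {x y}, E x y → E y x) (h : TriZigzagAt M E a b) : TriZigzagAt M E b a := by
  obtain ⟨hV, hforth, hback⟩ := h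
  refine ⟨fun n => (hV n).symm, fun t ht hnt => ?_, fun t' ht' hnt => ?_⟩
  · obtain ⟨t', ht', hEt⟩ := hback t ht hnt
    exact ⟨t', ht', hE hEt⟩
  · obtain ⟨t, ht, hEt⟩ := hforth t' ht' hnt
    exact ⟨t, ht, hE hEt⟩

theorem trans (hE : Equivalence E) (hab : E a b) (hbc : E b c)
    (h₁ : TriZigzagAt M E a b) (h₂ : TriZigzagAt M E b c) : TriZigzagAt M E a c := by
  obtain ⟨hV₁, hforth₁, hback₁⟩ := h₁
  obtain ⟨hV₂, hforth₂, hback₂⟩ := h₂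
  refine ⟨fun n => (hV₁ n).trans (hV₂ n), fun t ht hnt => ?_, fun t ht hnt => ?_⟩
  · obtain ⟨t₁, ht₁, hE₁⟩ := hforth₁ t ht hnt
    have hnt₁ : ¬ E b t₁ := fun h => hnt (hE.trans (hE.trans hab h) (hE.symm hE₁))
    obtain ⟨t₂, ht₂, hE₂⟩ := hforth₂ t₁ ht₁ hnt₁
    exact ⟨t₂, ht₂, hE.trans hE₁ hE₂⟩
  · obtain ⟨t₁, ht₁, hE₁⟩ := hback₂ t ht hnt
    have hnt₁ : ¬ E b t₁ := fun h => hnt (hE.trans (hE.trans (hE.symm hbc) h) hE₁)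
    obtain ⟨t₂, ht₂, hE₂⟩ := hback₁ t₁ ht₁ hnt₁
    exact ⟨t₂, ht₂, hE.trans hE₂ hE₁⟩

end TriZigzagAt

structure IsBoundedMorphism {M N : Model} (f : M.W → N.W) : Prop where
  V_iff : ∀ n a, N.V n (f a) ↔ M.V n a
  R_map : ∀ {a b}, M.R a b → N.R (f a) (f b)
  R_lift : ∀ {a t}, N.R (f a) t → ∃ b, M.R a b ∧ f b = t

namespace IsBoundedMorphism

protected theorem id (M : Model) : IsBoundedMorphism (M := M) id :=
  ⟨fun _ _ => Iff.rfl, id, fun h => ⟨_, h, rfl⟩⟩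

theorem comp {M N K : Model} {g : N.W → K.W} {f : M.W → N.W}
    (hg : IsBoundedMorphism g) (hf : IsBoundedMorphism f) : IsBoundedMorphism (g ∘ f) where
  V_iff n a := (hg.V_iff n (f a)).trans (hf.V_iff n a)
  R_map h := hg.R_map (hf.R_map h)
  R_lift h := by
    obtain ⟨b, hb, rfl⟩ := hg.R_lift h
    obtain ⟨c, hc, rfl⟩ := hf.R_lift hb
    exact ⟨c, hc, rfl⟩

theorem inl (M N : Model) : IsBoundedMorphism (M := M) (N := dsum M N) Sum.inl where
  V_iff _ _ := Iff.rfl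
  R_map h := h
  R_lift {_ t} h := by
    cases t with
    | inl b => exact ⟨b, h, rfl⟩
    | inr _ => exact h.elim

theorem inr (M N : Model) : IsBoundedMorphism (M := N) (N := dsum M N) Sum.inr where
  V_iff _ _ := Iff.rfl
  R_map h := h
  R_lift {_ t} h := by
    cases t with
    | inl _ => exact h.elim
    | inr b => exact ⟨b, h, rfl⟩

theorem elim {M N K : Model} {f : M.W → K.W} {g : N.W → K.W}
    (hf : IsBoundedMorphism f) (hg : IsBoundedMorphism g) :
    IsBoundedMorphism (M := dsum M N) (Sum.elim f g) where
  V_iff n a := by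
    cases a with
    | inl a => exact hf.V_iff n a
    | inr a => exact hg.V_iff n a
  R_map {a b} h := by
    cases a <;> cases b
    all_goals first | exact h.elim | exact hf.R_map h | exact hg.R_map h
  R_lift {a _} h := by
    cases a with
    | inl a =>
      obtain ⟨b, hb, rfl⟩ := hf.R_lift h
      exact ⟨.inl b, hb, rfl⟩
    | inr a =>
      obtain ⟨b, hb, rfl⟩ := hg.R_lift h
      exact ⟨.inr b, hb, rfl⟩

end IsBoundedMorphism

theorem triZigzag_eq (M : Model) : TriZigzag M Eq := by
  rintro s _ rfl
  exact TriZigzagAt.self (fun _ => rfl) s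

namespace TriZigzag

variable {M N : Model}

theorem comap {f : M.W → N.W} (hf : IsBoundedMorphism f) {Z : N.W → N.W → Prop}
    (hZ : TriZigzag N Z) : TriZigzag M (fun a b => Z (f a) (f b)) := by
  intro s s' hss'
  obtain ⟨hV, hforth, hback⟩ := hZ _ _ hss'
  refine ⟨fun n => (hf.V_iff n s).symm.trans ((hV n).trans (hf.V_iff n s')), ?_, ?_⟩
  · intro t ht hnt
    obtain ⟨u, hu, hZu⟩ := hforth _ (hf.R_map ht) hnt
    obtain ⟨t', ht', rfl⟩ := hf.R_lift hu
    exact ⟨t', ht', hZu⟩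
  · intro t' ht' hnt
    obtain ⟨u, hu, hZu⟩ := hback _ (hf.R_map ht') hnt
    obtain ⟨t, ht, rfl⟩ := hf.R_lift hu
    exact ⟨t, ht, hZu⟩

theorem map {f : M.W → N.W} (hf : IsBoundedMorphism f) {Z : M.W → M.W → Prop}
    (hZ : TriZigzag M Z) : TriZigzag N (Relation.Map Z f f) := by
  rintro _ _ ⟨s, s', hss', rfl, rfl⟩
  obtain ⟨hV, hforth, hback⟩ := hZ _ _ hss'
  refine ⟨fun n => (hf.V_iff n s).trans ((hV n).trans (hf.V_iff n s').symm), ?_, ?_⟩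
  · intro _ hu hnt
    obtain ⟨t, ht, rfl⟩ := hf.R_lift hu
    obtain ⟨t', ht', hZt⟩ := hforth t ht fun h => hnt ⟨s, t, h, rfl, rfl⟩
    exact ⟨f t', hf.R_map ht', t, t', hZt, rfl, rfl⟩
  · intro _ hu hnt
    obtain ⟨t', ht', rfl⟩ := hf.R_lift hu
    obtain ⟨t, ht, hZt⟩ := hback t' ht' fun h => hnt ⟨s', t', h, rfl, rfl⟩
    exact ⟨f t, hf.R_map ht, t, t', hZt, rfl, rfl⟩

theorem sup {Z₁ Z₂ : M.W → M.W → Prop} (h₁ : TriZigzag M Z₁) (h₂ : TriZigzag M Z₂) :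
    TriZigzag M (fun a b => Z₁ a b ∨ Z₂ a b) := by
  rintro s s' (h | h)
  · exact (h₁ s s' h).mono Or.inl
  · exact (h₂ s s' h).mono Or.inr

theorem eqvGen {Z : M.W → M.W → Prop} (hZ : TriZigzag M Z) : TriZigzag M (Relation.EqvGen Z) := by
  have hE : Equivalence (Relation.EqvGen Z) := Relation.EqvGen.is_equivalence Z
  intro s s' h
  induction h with
  | rel a b hab => exact (hZ a b hab).mono (Relation.EqvGen.rel _ _)
  | refl a => exact .self hE.refl a
  | symm a b _ ih => exact ih.symm hE.symm
  | trans a b c hab hbc ih₁ ih₂ => exact ih₁.trans hE hab hbc ih₂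

end TriZigzag

end Model

open Model

theorem TriBisimilar.refl (M : Model) (s : M.W) : TriBisimilar M s M s :=
  triBisimilar_iff.2 ⟨_, (triZigzag_eq M).comap (.elim (.id M) (.id M)), rfl⟩

theorem TriBisimilar.symm {M N : Model} {s : M.W} {t : N.W} (h : TriBisimilar M s N t) :
    TriBisimilar N t M s := by
  obtain ⟨Z, hZ, hst⟩ := triBisimilar_iff.1 h
  exact triBisimilar_iff.2 ⟨_, hZ.eqvGen.comap (.elim (.inr M N) (.inl M N)),
    .symm _ _ (.rel _ _ hst)⟩

theorem TriBisimilar.trans {M N O : Model} {s : M.W} {t : N.W} {u : O.W}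
    (h₁ : TriBisimilar M s N t) (h₂ : TriBisimilar N t O u) : TriBisimilar M s O u := by
  obtain ⟨Z₁, hZ₁, hst⟩ := triBisimilar_iff.1 h₁
  obtain ⟨Z₂, hZ₂, htu⟩ := triBisimilar_iff.1 h₂
  have hMN := IsBoundedMorphism.inl (dsum M N) O
  have hNO := (hMN.comp (.inr M N)).elim (.inr (dsum M N) O)
  have hMO := (hMN.comp (.inl M N)).elim (.inr (dsum M N) O)
  have hZ := ((hZ₁.map hMN).sup (hZ₂.map hNO)).eqvGen
  exact triBisimilar_iff.2 ⟨_, hZ.comap hMO,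
    .trans _ (.inl (.inr t)) _ (.rel _ _ (.inl ⟨_, _, hst, rfl, rfl⟩))
      (.rel _ _ (.inr ⟨_, _, htu, rfl, rfl⟩))⟩

theorem stmt12 :
    (∀ (M : Model) (s : M.W), TriBisimilar M s M s) ∧
    (∀ (M N : Model) (s : M.W) (t : N.W),
        TriBisimilar M s N t → TriBisimilar N t M s) ∧
    (∀ (M N O : Model) (s : M.W) (t : N.W) (u : O.W),
        TriBisimilar M s N t → TriBisimilar N t O u → TriBisimilar M s O u) :=
  ⟨TriBisimilar.refl, fun _ _ _ _ => TriBisimilar.symm, fun _ _ _ _ _ _ => TriBisimilar.trans⟩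
end

section
/- ▲-bisimilarity implies ▲-equivalence: if pointed models (M,s) and (M',s') are ▲-bisimilar, then for every formula φ of the language L(▲), M,s ⊨ φ iff M',s' ⊨ φ. -/
/-- The language L(▲). -/
inductive Formula where
  | atom : ℕ → Formula
  | top : Formula
  | neg : Formula → Formula
  | and : Formula → Formula → Formula
  | tri : Formula → Formula

/-- Satisfaction of L(▲)-formulas. -/
def sat (M : Model) : M.W → Formula → Prop
  | s, .atom n => M.V n s
  | _, .top => True
  | s, .neg φ => ¬ sat M s φ
  | s, .and φ ψ => sat M s φ ∧ sat M s ψ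
  | s, .tri φ =>
      (sat M s φ → ∀ t, M.R s t → sat M t φ) ∧
      (¬ sat M s φ → ∀ t, M.R s t → ¬ sat M t φ)

/-!
A ▲-formula at `a` only compares `a` with its successors. If `a Z b` and `t` is a successor of `a`,
either `a Z t`, and the induction hypothesis already says `a` and `t` agree, or the zig clause
gives a successor `u` of `b` with `t Z u`; so the agreement of `b` with its successors transfers
to `a`. Truth is also invariant under the embeddings of `M` and `N` into their disjoint union.
-/

lemma sat_tri_iff (M : Model) (s : M.W) (φ : Formula) :
    sat M s (.tri φ) ↔ ∀ t, M.R s t → (sat M s φ ↔ sat M t φ) := by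
  simp only [sat]
  exact ⟨fun ⟨h₁, h₂⟩ t hst => ⟨(h₁ · t hst), fun ht => by_contra fun hs => h₂ hs t hst ht⟩,
    fun h => ⟨fun hs t hst => (h t hst).mp hs, fun hs t hst ht => hs ((h t hst).mpr ht)⟩⟩

structure IsBoundedMorphism (M N : Model) (f : M.W → N.W) : Prop where
  V_iff : ∀ n s, N.V n (f s) ↔ M.V n s
  R_map : ∀ {s t}, M.R s t → N.R (f s) (f t)
  R_lift : ∀ {s u}, N.R (f s) u → ∃ t, M.R s t ∧ f t = u

lemma IsBoundedMorphism.sat_iff {M N : Model} {f : M.W → N.W} (hf : IsBoundedMorphism M N f)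
    (φ : Formula) (s : M.W) : sat N (f s) φ ↔ sat M s φ := by
  induction φ generalizing s with
  | atom n => exact hf.V_iff n s
  | top => exact Iff.rfl
  | neg φ ih => exact not_congr (ih s)
  | and φ ψ ihφ ihψ => exact and_congr (ihφ s) (ihψ s)
  | tri φ ih =>
    rw [sat_tri_iff, sat_tri_iff]
    constructor
    · intro h t hst
      simpa only [ih] using h (f t) (hf.R_map hst)
    · rintro h _ hu
      obtain ⟨t, hst, rfl⟩ := hf.R_lift hu
      simpa only [ih] using h t hst

lemma isBoundedMorphism_inl (M N : Model) : IsBoundedMorphism M (dsum M N) Sum.inl where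
  V_iff _ _ := Iff.rfl
  R_map h := h
  R_lift := by
    rintro s (t | t) h
    exacts [⟨t, h, rfl⟩, h.elim]

lemma isBoundedMorphism_inr (M N : Model) : IsBoundedMorphism N (dsum M N) Sum.inr where
  V_iff _ _ := Iff.rfl
  R_map h := h
  R_lift := by
    rintro s (t | t) h
    exacts [h.elim, ⟨t, h, rfl⟩]

lemma IsTriBisim.sat_iff {K : Model} {Z : K.W → K.W → Prop} (hZ : IsTriBisim K Z)
    (φ : Formula) {a b : K.W} (hab : Z a b) : sat K a φ ↔ sat K b φ := by
  induction φ generalizing a b with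
  | atom n => exact (hZ.2 a b hab).1 n
  | top => exact Iff.rfl
  | neg φ ih => exact not_congr (ih hab)
  | and φ ψ ihφ ihψ => exact and_congr (ihφ hab) (ihψ hab)
  | tri φ ih =>
    obtain ⟨-, zig, zag⟩ := hZ.2 a b hab
    rw [sat_tri_iff, sat_tri_iff]
    constructor
    · intro ha t hbt
      by_cases hZbt : Z b t
      · exact ih hZbt
      obtain ⟨u, hau, hZut⟩ := zag t hbt hZbt
      exact (ih hab).symm.trans ((ha u hau).trans (ih hZut))
    · intro hb t hat
      by_cases hZat : Z a t
      · exact ih hZat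
      obtain ⟨u, hbu, hZtu⟩ := zig t hat hZat
      exact (ih hab).trans ((hb u hbu).trans (ih hZtu).symm)

theorem stmt13 (M N : Model) (s : M.W) (t : N.W)
    (h : TriBisimilar M s N t) :
    ∀ φ : Formula, sat M s φ ↔ sat N t φ := by
  obtain ⟨Z, hZ, hst⟩ := h
  intro φ
  rw [← (isBoundedMorphism_inl M N).sat_iff, ← (isBoundedMorphism_inr M N).sat_iff]
  exact hZ.sat_iff φ hst
end

section
/- If two pointed models are Box-bisimilar (standard bisimilar), then they are ▲-bisimilar; the converse fails (e.g., the single reflexive point versus the single irreflexive point, both satisfying p, are ▲-bisimilar but not Box-bisimilar). -/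
/-- Z is a standard (□-)bisimulation between M and N. -/
def IsBoxBisim (M N : Model) (Z : M.W → N.W → Prop) : Prop :=
  (∃ a b, Z a b) ∧
  ∀ s s', Z s s' →
    (∀ n, M.V n s ↔ N.V n s') ∧
    (∀ t, M.R s t → ∃ t', N.R s' t' ∧ Z t t') ∧
    (∀ t', N.R s' t' → ∃ t, M.R s t ∧ Z t t')

def BoxBisimilar (M : Model) (s : M.W) (N : Model) (t : N.W) : Prop :=
  ∃ Z, IsBoxBisim M N Z ∧ Z s t

theorem stmt14 :
    (∀ (M N : Model) (s : M.W) (t : N.W),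
        BoxBisimilar M s N t → TriBisimilar M s N t) ∧
    (∃ (M N : Model) (s : M.W) (t : N.W),
        TriBisimilar M s N t ∧ ¬ BoxBisimilar M s N t) := by
  constructor
  · rintro M N s t ⟨Z, ⟨⟨a, b, hab⟩, hZ⟩, hst⟩
    refine ⟨fun x y => ∃ u v, x = .inl u ∧ y = .inr v ∧ Z u v, ⟨⟨_, _, a, b, rfl, rfl, hab⟩, ?_⟩, s, t, rfl, rfl, hst⟩
    rintro _ _ ⟨u, v, rfl, rfl, huv⟩
    obtain ⟨hinv, hf, hb⟩ := hZ u v huv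
    refine ⟨fun n => hinv n, ?_, ?_⟩
    · rintro (w | w) hr hnz
      · obtain ⟨t', ht', hzt⟩ := hf w hr
        exact ⟨.inr t', ht', w, t', rfl, rfl, hzt⟩
      · exact absurd hr (by simp [dsum])
    · rintro (w | w) hr hnz
      · exact absurd hr (by simp [dsum])
      · obtain ⟨t', ht', hzt⟩ := hb w hr
        exact ⟨.inl t', ht', t', w, rfl, rfl, hzt⟩
  · refine ⟨⟨Unit, ⟨()⟩, fun _ _ => True, fun _ _ => True⟩,
      ⟨Unit, ⟨()⟩, fun _ _ => False, fun _ _ => True⟩, (), (), ?_, ?_⟩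
    · refine ⟨fun x y => (x = .inl () ∧ y = .inl ()) ∨ (x = .inl () ∧ y = .inr ()),
        ⟨⟨_, _, Or.inr ⟨rfl, rfl⟩⟩, ?_⟩, Or.inr ⟨rfl, rfl⟩⟩
      rintro _ _ (⟨rfl, rfl⟩ | ⟨rfl, rfl⟩)
      · refine ⟨fun n => Iff.rfl, ?_, ?_⟩
        · rintro (⟨⟩ | w) hr hnz
          · exact absurd (Or.inl ⟨rfl, rfl⟩) hnz
          · exact absurd hr (by simp [dsum])
        · rintro (⟨⟩ | w) hr hnz
          · exact absurd (Or.inl ⟨rfl, rfl⟩) hnz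
          · exact absurd hr (by simp [dsum])
      · refine ⟨fun n => Iff.rfl, ?_, ?_⟩
        · rintro (⟨⟩ | w) hr hnz
          · exact absurd (Or.inl ⟨rfl, rfl⟩) hnz
          · exact absurd hr (by simp [dsum])
        · rintro (w | ⟨⟩) hr hnz
          · exact absurd hr (by simp [dsum])
          · exact absurd hr (by simp [dsum])
    · rintro ⟨Z, ⟨_, hZ⟩, hst⟩
      obtain ⟨_, hf, _⟩ := hZ () () hst
      obtain ⟨t', ht', _⟩ := hf () trivial
      exact ht'
end
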